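/- arXiv:1411.4082 — 4 statements merged into one kernel-verified Lean document; each statement's English description precedes it below -/
import Mathlib

section
/- Let F be a field of characteristic 0 and c : F* × F* → {±1} bimultiplicative and antisymmetric, with the property that c(x,y)=1 for all y ∈ F* if and only if x ∈ (F*)². For b, b' ∈ (F*)ⁿ set [b,b'] = ∏_{i=1}^{n} c(bᵢ,b'ᵢ) · c(∏ᵢbᵢ, ∏ᵢb'ᵢ). Then b satisfies [b,b'] = 1 for all b' ∈ (F*)ⁿ if and only if there exist d ∈ F* with d^{n+1} ∈ (F*)² and a₁,…,a_n ∈ F* such that bᵢ = aᵢ²·d for every i. -/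
/-!
Testing `[b, ·]` against `b'` supported in one coordinate `j` shows that `b` is in the kernel
exactly when every `bⱼ · ∏ᵢ bᵢ` lies in the left kernel of `c`, i.e. is a square `aⱼ²`; then
`bⱼ = aⱼ² d` with `d = (∏ᵢ bᵢ)⁻¹`, and multiplying these relations gives `d⁻⁽ⁿ⁺¹⁾ = (∏ⱼ aⱼ)²`.
Conversely, as `c` is `±1`-valued, squares are invisible to it, so for `bᵢ = aᵢ² d` the pairing
collapses to `c(d^(n+1), ∏ᵢ b'ᵢ)`, which is trivial when `d^(n+1)` is a square.
-/

open Finset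

/-- The commutator pairing `[b,b'] = ∏ᵢ c(bᵢ,b'ᵢ) · c(∏ᵢbᵢ, ∏ᵢb'ᵢ)` on the covered torus,
coordinates indexed `1,…,n`. -/
def brkt {F : Type*} [Field F] (c : Fˣ → Fˣ → ℤˣ) (n : ℕ) (b b' : ℕ → Fˣ) : ℤˣ :=
  (∏ i ∈ Icc 1 n, c (b i) (b' i)) * c (∏ i ∈ Icc 1 n, b i) (∏ i ∈ Icc 1 n, b' i)

def MonoidHom.mk₂ {G H M : Type*} [CommGroup G] [CommGroup H] [CommGroup M] (c : G → H → M)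
    (hml : ∀ x y z, c (x * y) z = c x z * c y z) (hmr : ∀ x y z, c x (y * z) = c x y * c x z) :
    G →* H →* M :=
  MonoidHom.mk' (fun x => MonoidHom.mk' (c x) (hmr x)) fun x y => MonoidHom.ext (hml x y)

theorem MonoidHom.mk₂_apply {G H M : Type*} [CommGroup G] [CommGroup H] [CommGroup M]
    (c : G → H → M) (hml : ∀ x y z, c (x * y) z = c x z * c y z)
    (hmr : ∀ x y z, c x (y * z) = c x y * c x z) (x : G) (y : H) :
    MonoidHom.mk₂ c hml hmr x y = c x y :=
  rfl

theorem map_sq_mul_of_units_int {G H : Type*} [CommGroup G] [CommGroup H] (c : G →* H →* ℤˣ)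
    (a x : G) : c (a ^ 2 * x) = c x := by
  have hsq : c a ^ 2 = 1 := MonoidHom.ext fun y => Int.units_sq (c a y)
  rw [map_mul, map_pow, hsq, one_mul]

theorem prod_pow_card_succ_eq_sq {ι G : Type*} [CommGroup G] {s : Finset ι} {a b : ι → G}
    (h : ∀ j ∈ s, b j * ∏ i ∈ s, b i = a j ^ 2) :
    (∏ i ∈ s, b i) ^ (#s + 1) = (∏ i ∈ s, a i) ^ 2 :=
  calc (∏ i ∈ s, b i) ^ (#s + 1) = ∏ j ∈ s, (b j * ∏ i ∈ s, b i) := by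
        rw [prod_mul_distrib, prod_const, pow_succ']
    _ = (∏ i ∈ s, a i) ^ 2 := by rw [prod_congr rfl h, prod_pow]

section Pairing

variable {F : Type*} [Field F] (c : Fˣ →* Fˣ →* ℤˣ) {n : ℕ}

theorem brkt_mulSingle {j : ℕ} (hj : j ∈ Icc 1 n) (b : ℕ → Fˣ) (y : Fˣ) :
    brkt (c · ·) n b (Pi.mulSingle j y) = c (b j * ∏ i ∈ Icc 1 n, b i) y := by
  have hsingle : ∏ i ∈ Icc 1 n, c (b i) ((Pi.mulSingle j y : ℕ → Fˣ) i) = c (b j) y := by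
    rw [prod_eq_single_of_mem j hj fun i _ hij => by rw [Pi.mulSingle_eq_of_ne hij, map_one]]
    rw [Pi.mulSingle_eq_same]
  rw [brkt, hsingle, prod_pi_mulSingle', if_pos hj, map_mul, MonoidHom.mul_apply]

theorem brkt_of_eq_sq_mul {b a : ℕ → Fˣ} {d : Fˣ} (h : ∀ i ∈ Icc 1 n, b i = a i ^ 2 * d)
    (b' : ℕ → Fˣ) : brkt (c · ·) n b b' = c (d ^ (n + 1)) (∏ i ∈ Icc 1 n, b' i) := by
  have hprod : ∏ i ∈ Icc 1 n, b i = (∏ i ∈ Icc 1 n, a i) ^ 2 * d ^ n := by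
    rw [prod_congr rfl h, prod_mul_distrib, prod_pow, prod_const, Nat.card_Icc,
      Nat.add_sub_cancel]
  have hcoord : ∀ i ∈ Icc 1 n, c (b i) (b' i) = c d (b' i) := fun i hi => by
    rw [h i hi, map_sq_mul_of_units_int]
  rw [brkt, prod_congr rfl hcoord, ← map_prod, hprod, map_sq_mul_of_units_int, pow_succ',
    map_mul, MonoidHom.mul_apply]

end Pairing

theorem stmt_5_general {F : Type*} [Field F] (c : Fˣ → Fˣ → ℤˣ)
    (hml : ∀ x y z : Fˣ, c (x * y) z = c x z * c y z)
    (hmr : ∀ x y z : Fˣ, c x (y * z) = c x y * c x z)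
    (hker : ∀ x : Fˣ, (∀ y : Fˣ, c x y = 1) ↔ ∃ z : Fˣ, x = z ^ 2)
    (n : ℕ) (b : ℕ → Fˣ) :
    (∀ b' : ℕ → Fˣ, brkt c n b b' = 1) ↔
      ∃ d : Fˣ, (∃ e : Fˣ, d ^ (n + 1) = e ^ 2) ∧
        ∃ a : ℕ → Fˣ, ∀ i ∈ Icc 1 n, b i = (a i) ^ 2 * d := by
  let C := MonoidHom.mk₂ c hml hmr
  change (∀ b', brkt (C · ·) n b b' = 1) ↔ _
  constructor
  · intro h
    have hsq : ∀ j ∈ Icc 1 n, ∃ z, b j * ∏ i ∈ Icc 1 n, b i = z ^ 2 := fun j hj =>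
      (hker _).1 fun y => by rw [← MonoidHom.mk₂_apply c hml hmr, ← brkt_mulSingle C hj, h]
    choose! a ha using hsq
    refine ⟨(∏ i ∈ Icc 1 n, b i)⁻¹, ⟨(∏ i ∈ Icc 1 n, a i)⁻¹, ?_⟩, a,
      fun j hj => eq_mul_inv_of_mul_eq (ha j hj)⟩
    rw [inv_pow, inv_pow, ← prod_pow_card_succ_eq_sq ha, Nat.card_Icc, Nat.add_sub_cancel]
  · rintro ⟨d, ⟨e, he⟩, a, hb⟩ b'
    rw [brkt_of_eq_sq_mul C hb, he, ← mul_one (e ^ 2), map_sq_mul_of_units_int, map_one,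
      MonoidHom.one_apply]

theorem stmt_5 {F : Type*} [Field F] [CharZero F] (c : Fˣ → Fˣ → ℤˣ)
    (hml : ∀ x y z : Fˣ, c (x * y) z = c x z * c y z)
    (hmr : ∀ x y z : Fˣ, c x (y * z) = c x y * c x z)
    (hanti : ∀ x y : Fˣ, c x y = (c y x)⁻¹)
    (hker : ∀ x : Fˣ, (∀ y : Fˣ, c x y = 1) ↔ ∃ z : Fˣ, x = z ^ 2)
    (n : ℕ) (b : ℕ → Fˣ) :
    (∀ b' : ℕ → Fˣ, brkt c n b b' = 1) ↔
      ∃ d : Fˣ, (∃ e : Fˣ, d ^ (n + 1) = e ^ 2) ∧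
        ∃ a : ℕ → Fˣ, ∀ i ∈ Icc 1 n, b i = (a i) ^ 2 * d :=
  stmt_5_general c hml hmr hker n b
end

section
/- Let c : F* × F* → {±1} be bimultiplicative and symmetric on commuting data in the following sense: c(x,y)c(y,x)=1, c(x²,y)=1=c(x,y²), and c(x,·) ≡ 1 if and only if x ∈ (F*)². For b,b' ∈ (F*)ⁿ define [b,b'] = ∏ᵢ c(bᵢ,b'ᵢ)·c(∏ᵢbᵢ,∏ᵢb'ᵢ). Let Tᵐ = { b ∈ (F*)ⁿ : b_{n−2i}⁻¹·b_{n−2i−1} ∈ (F*)² for all 0 ≤ i < ⌊n/2⌋ }. Then: (a) [b,b'] = 1 for all b,b' ∈ Tᵐ; (b) Tᵐ is maximal with this property: if b ∈ (F*)ⁿ satisfies [b,b'] = 1 for all b' ∈ Tᵐ, then b ∈ Tᵐ. -/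
open Finset

/-- `Tᵐ`: tuples whose consecutive pairs `(b_{n−2i−1}, b_{n−2i})` (1-based coordinates,
counted from the top) have square ratio. -/
def TmSet {F : Type*} [Field F] (n : ℕ) : Set (ℕ → Fˣ) :=
  {b | ∀ i : ℕ, i < n / 2 → ∃ e : Fˣ, b (n - 2 * i - 1) = e ^ 2 * b (n - 2 * i)}

private lemma prod_Icc_split {M : Type*} [CommMonoid M] (f : ℕ → M) (m : ℕ) :
    ∏ i ∈ Icc 1 (m + 2), f i = (∏ i ∈ Icc 1 m, f i) * f (m + 1) * f (m + 2) := by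
  rw [show m + 2 = (m + 1) + 1 from rfl, Finset.prod_Icc_succ_top (by omega),
    Finset.prod_Icc_succ_top (by omega)]

theorem stmt_7 {F : Type*} [Field F] [CharZero F] (c : Fˣ → Fˣ → ℤˣ)
    (hml : ∀ x y z : Fˣ, c (x * y) z = c x z * c y z)
    (hmr : ∀ x y z : Fˣ, c x (y * z) = c x y * c x z)
    (hcomm : ∀ x y : Fˣ, c x y * c y x = 1)
    (hsql : ∀ x y : Fˣ, c (x ^ 2) y = 1)
    (hsqr : ∀ x y : Fˣ, c x (y ^ 2) = 1)
    (hker : ∀ x : Fˣ, (∀ y : Fˣ, c x y = 1) ↔ ∃ z : Fˣ, x = z ^ 2)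
    (n : ℕ) :
    (∀ b ∈ TmSet (F := F) n, ∀ b' ∈ TmSet (F := F) n, brkt c n b b' = 1) ∧
    (∀ b : ℕ → Fˣ, (∀ b' ∈ TmSet (F := F) n, brkt c n b b' = 1) → b ∈ TmSet (F := F) n) := by
  have sq1 : ∀ u : ℤˣ, u * u = 1 := by decide
  have hc1r : ∀ x : Fˣ, c x 1 = 1 := fun x => by
    have := hsqr x 1; simpa using this
  have hsl : ∀ (e x y : Fˣ), c (e ^ 2 * x) y = c x y := fun e x y => by
    rw [hml, hsql, one_mul]
  have hsr : ∀ (f x y : Fˣ), c x (f ^ 2 * y) = c x y := fun f x y => by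
    rw [hmr, hsqr, one_mul]
  constructor
  · have key : ∀ m : ℕ, ∀ b b' : ℕ → Fˣ, b ∈ TmSet (F := F) m → b' ∈ TmSet (F := F) m →
        brkt c m b b' = 1 := by
      intro m
      induction m using Nat.twoStepInduction with
      | zero =>
        intro b b' _ _
        have h0 : Icc 1 0 = (∅ : Finset ℕ) := rfl
        simp only [brkt, h0, Finset.prod_empty, one_mul]
        simpa using hsql 1 1
      | one =>
        intro b b' _ _
        simp only [brkt, Finset.Icc_self, Finset.prod_singleton]
        exact sq1 _
      | more m ih _ =>
        intro b b' hb hb'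
        simp only [TmSet, Set.mem_setOf_eq] at hb hb'
        have hb2 : b ∈ TmSet (F := F) m := by
          intro i hi
          obtain ⟨e, he⟩ := hb (i + 1) (by omega)
          rw [show m + 2 - 2 * (i + 1) - 1 = m - 2 * i - 1 from by omega,
            show m + 2 - 2 * (i + 1) = m - 2 * i from by omega] at he
          exact ⟨e, he⟩
        have hb2' : b' ∈ TmSet (F := F) m := by
          intro i hi
          obtain ⟨e, he⟩ := hb' (i + 1) (by omega)
          rw [show m + 2 - 2 * (i + 1) - 1 = m - 2 * i - 1 from by omega,
            show m + 2 - 2 * (i + 1) = m - 2 * i from by omega] at he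
          exact ⟨e, he⟩
        obtain ⟨e, he⟩ := hb 0 (by omega)
        obtain ⟨f, hf⟩ := hb' 0 (by omega)
        rw [show m + 2 - 2 * 0 - 1 = m + 1 from by omega,
          show m + 2 - 2 * 0 = m + 2 from by omega] at he
        rw [show m + 2 - 2 * 0 - 1 = m + 1 from by omega,
          show m + 2 - 2 * 0 = m + 2 from by omega] at hf
        unfold brkt
        rw [prod_Icc_split, prod_Icc_split, prod_Icc_split, he, hf]
        rw [show (∏ i ∈ Icc 1 m, b i) * (e ^ 2 * b (m + 2)) * b (m + 2)
            = (e * b (m + 2)) ^ 2 * (∏ i ∈ Icc 1 m, b i) from by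
          rw [mul_pow, sq, sq]; ac_rfl]
        rw [show (∏ i ∈ Icc 1 m, b' i) * (f ^ 2 * b' (m + 2)) * b' (m + 2)
            = (f * b' (m + 2)) ^ 2 * (∏ i ∈ Icc 1 m, b' i) from by
          rw [mul_pow, sq, sq]; ac_rfl]
        simp only [hsl, hsr]
        have hP := ih b b' hb2 hb2'
        unfold brkt at hP
        exact (by decide : ∀ p u q : ℤˣ, p * q = 1 → p * u * u * q = 1) _ _ _ hP
    exact fun b hb b' hb' => key n b b' hb hb'
  · intro b hb
    simp only [TmSet, Set.mem_setOf_eq]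
    intro i hi
    have hle : 2 * i + 2 ≤ n := by omega
    have hne : n - 2 * i - 1 ≠ n - 2 * i := by omega
    have hsq : ∃ z : Fˣ, b (n - 2 * i - 1) * b (n - 2 * i) = z ^ 2 := by
      rw [← hker]
      intro t
      set b' : ℕ → Fˣ := fun j => if j = n - 2 * i - 1 ∨ j = n - 2 * i then t else 1 with hb'd
      have hva : b' (n - 2 * i - 1) = t := by simp [hb'd]
      have hva' : b' (n - 2 * i) = t := by simp [hb'd]
      have hvo : ∀ j, j ≠ n - 2 * i - 1 → j ≠ n - 2 * i → b' j = 1 := by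
        intro j h1 h2; simp [hb'd, h1, h2]
      have hmem : b' ∈ TmSet (F := F) n := by
        simp only [TmSet, Set.mem_setOf_eq]
        intro k hk
        refine ⟨1, ?_⟩
        rw [one_pow, one_mul]
        by_cases hki : k = i
        · subst hki; rw [hva, hva']
        · rw [hvo _ (by omega) (by omega), hvo _ (by omega) (by omega)]
      have hsub : ({n - 2 * i - 1, n - 2 * i} : Finset ℕ) ⊆ Icc 1 n := by
        simp only [Finset.insert_subset_iff, Finset.singleton_subset_iff, Finset.mem_Icc]
        omega
      have hprod1 : ∏ j ∈ Icc 1 n, c (b j) (b' j)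
          = c (b (n - 2 * i - 1)) t * c (b (n - 2 * i)) t := by
        rw [← Finset.prod_subset hsub (fun x _ hxs => by
          simp only [Finset.mem_insert, Finset.mem_singleton, not_or] at hxs
          rw [hvo x hxs.1 hxs.2, hc1r])]
        rw [Finset.prod_pair hne, hva, hva']
      have hprod2 : ∏ j ∈ Icc 1 n, b' j = t * t := by
        rw [← Finset.prod_subset hsub (fun x _ hxs => by
          simp only [Finset.mem_insert, Finset.mem_singleton, not_or] at hxs
          exact hvo x hxs.1 hxs.2)]
        rw [Finset.prod_pair hne, hva, hva']
      have hbr := hb b' hmem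
      unfold brkt at hbr
      rw [hprod1, hprod2, show t * t = t ^ 2 from (sq t).symm, hsqr, mul_one, ← hml] at hbr
      exact hbr
    obtain ⟨z, hz⟩ := hsq
    refine ⟨z * (b (n - 2 * i))⁻¹, ?_⟩
    rw [mul_pow, inv_pow, ← hz]
    group
end

section
/- Let n ≥ 1 and let λ = (r₁ ≥ r₂ ≥ … ≥ r_m > 0) be a partition of 2n+1 in which every even number occurs with even multiplicity. Let O₀ = (2ⁿ,1) if n is even and O₀ = (2^{n−1},1,1,1) if n is odd, and let O₁ = (3,1^{2n−2}). Then the following are equivalent: (i) λ is not ≤ O₀ in the dominance order; (ii) r₁ ≥ 3; (iii) λ ≥ O₁ in the dominance order. In particular, every such partition that is greater than or incomparable to O₀ dominates (3,1^{2n−2}). -/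
/-!
Everything is read off the first part `r₁`. If `r₁ ≥ 3`, then `r` beats both `O₀` (whose parts
are at most `2`) and `O₁` in the first partial sum, while the parts of `r` being positive give
`r₁ + ⋯ + r_k ≥ 3 + (k - 1)`, which is the `k`-th partial sum of `O₁`. If `r₁ ≤ 2`, then
`r = (2^c, 1^{2n+1-2c})` with `c` even by the multiplicity condition, so `c ≤ n`, and even
`c ≤ n - 1` when `n` is odd; such a partition is dominated by `(2^c', 1^{2n+1-2c'})` for every
`c' ≥ c`, in particular by `O₀`.
-/

/-- Dominance order on partitions (written as lists, implicitly padded by zeros):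
`Dominates r s` means `r ≥ s`, i.e. every partial sum of `r` is at least the
corresponding partial sum of `s`. -/
def Dominates (r s : List ℕ) : Prop :=
  ∀ k : ℕ, (s.take k).sum ≤ (r.take k).sum

namespace List

theorem sum_take_one (l : List ℕ) : (l.take 1).sum = l.headI := by
  cases l <;> simp

theorem le_headI_of_pairwise_ge {l : List ℕ} (hl : l.Pairwise (· ≥ ·)) {x : ℕ} (hx : x ∈ l) :
    x ≤ l.headI := by
  cases l with
  | nil => simp at hx
  | cons a t =>
    rcases mem_cons.mp hx with rfl | hx
    · exact le_rfl
    · exact (pairwise_cons.mp hl).1 x hx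

theorem count_mul_le_sum (l : List ℕ) (a : ℕ) : l.count a * a ≤ l.sum := by
  simpa using (replicate_sublist_iff.mpr le_rfl : replicate (l.count a) a <+ l).sum_le_sum
    (fun _ _ => Nat.zero_le _)

theorem sum_le_length_add_count_two {l : List ℕ} (hl : ∀ x ∈ l, x ≤ 2) :
    l.sum ≤ l.length + l.count 2 := by
  induction l with
  | nil => simp
  | cons a t ih =>
    have ha := hl a mem_cons_self
    have ht := ih fun x hx => hl x (mem_cons_of_mem a hx)
    by_cases h2 : a = 2
    · subst h2
      rw [sum_cons, length_cons, count_cons_self]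
      omega
    · rw [sum_cons, length_cons, count_cons_of_ne h2]
      omega

theorem sum_take_replicate_append (c a : ℕ) (t : List ℕ) (k : ℕ) :
    ((replicate c a ++ t).take k).sum = a * min k c + (t.take (k - c)).sum := by
  rw [take_append, sum_append, take_replicate, sum_replicate, length_replicate, smul_eq_mul,
    Nat.mul_comm]

end List

open List

theorem Dominates.headI_le {r s : List ℕ} (h : Dominates r s) : s.headI ≤ r.headI := by
  simpa only [sum_take_one] using h 1

theorem headI_replicate_two_append_replicate_one_le (c m : ℕ) :
    (replicate c 2 ++ replicate m 1).headI ≤ 2 := by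
  rcases c with _ | c <;> rcases m with _ | m <;> simp [replicate_succ]

theorem dominates_replicate_two_append_replicate_one {l : List ℕ} {c m : ℕ}
    (hle : ∀ x ∈ l, x ≤ 2) (hcount : l.count 2 ≤ c) (hsum : l.sum ≤ 2 * c + m) :
    Dominates (replicate c 2 ++ replicate m 1) l := by
  intro k
  have hle_take : ∀ x ∈ l.take k, x ≤ 2 := fun x hx => hle x (take_subset k l hx)
  have h_twice : (l.take k).sum ≤ 2 * k := by
    have := sum_le_card_nsmul _ 2 hle_take
    rw [length_take, smul_eq_mul] at this
    omega
  have h_count : (l.take k).sum ≤ k + c := by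
    have hc := (take_sublist k l).count_le 2
    have := sum_le_length_add_count_two hle_take
    rw [length_take] at this
    omega
  have h_total : (l.take k).sum ≤ l.sum := (take_sublist k l).sum_le_sum fun _ _ => Nat.zero_le _
  rw [sum_take_replicate_append, ← append_nil (replicate m 1), sum_take_replicate_append]
  simp only [take_nil, sum_nil]
  omega

theorem dominates_cons_replicate_one {l : List ℕ} {a m : ℕ} (hpos : ∀ x ∈ l, 0 < x)
    (ha : a ≤ l.headI) (hsum : a + m ≤ l.sum) : Dominates l (a :: replicate m 1) := by
  rintro (_ | k)
  · simp
  rw [take_succ_cons, sum_cons, take_replicate, sum_replicate, smul_eq_mul, mul_one]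
  rcases le_or_gt l.length (k + 1) with hk | hk
  · rw [take_of_length_le hk]
    omega
  obtain ⟨b, t, rfl⟩ := exists_cons_of_length_pos (Nat.zero_lt_of_lt hk)
  have h_tail : min k t.length ≤ (t.take k).sum := by
    simpa using length_le_sum_of_one_le (t.take k)
      fun x hx => hpos x (mem_cons_of_mem b (take_subset k t hx))
  simp only [headI_cons, length_cons, take_succ_cons, sum_cons] at ha hk ⊢
  omega

theorem stmt_9_general (n : ℕ) (r : List ℕ)
    (hsort : List.Pairwise (· ≥ ·) r) (hpos : ∀ x ∈ r, 0 < x)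
    (hsum : r.sum = 2 * n + 1)
    (hmult : ∀ k : ℕ, Even k → Even (r.count k)) :
    let O0 : List ℕ := if Even n then List.replicate n 2 ++ [1]
      else List.replicate (n - 1) 2 ++ [1, 1, 1]
    let O1 : List ℕ := 3 :: List.replicate (2 * n - 2) 1
    (¬ Dominates O0 r ↔ 3 ≤ r.headI) ∧ (3 ≤ r.headI ↔ Dominates r O1) := by
  intro O0 O1
  have h_twos : r.count 2 * 2 ≤ 2 * n + 1 := hsum ▸ count_mul_le_sum r 2
  obtain ⟨c, m, hO0, hcm, hc⟩ : ∃ c m, O0 = replicate c 2 ++ replicate m 1 ∧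
      2 * c + m = 2 * n + 1 ∧ r.count 2 ≤ c := by
    by_cases hev : Even n
    · exact ⟨n, 1, if_pos hev, rfl, by omega⟩
    · obtain ⟨p, rfl⟩ := Nat.not_even_iff_odd.mp hev
      obtain ⟨q, hq⟩ := hmult 2 even_two
      exact ⟨2 * p, 3, by simp [O0, hev], by omega, by omega⟩
  have h_head_sum := headI_le_sum r
  refine ⟨⟨fun h_not => ?_, fun h3 h_dom => ?_⟩,
    ⟨fun h3 => dominates_cons_replicate_one hpos h3 (by omega), fun h_dom => h_dom.headI_le⟩⟩
  · by_contra! h2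
    refine h_not (hO0 ▸ dominates_replicate_two_append_replicate_one ?_ hc (by omega))
    exact fun x hx => (le_headI_of_pairwise_ge hsort hx).trans (by omega)
  · have h_head_le := hO0 ▸ h_dom.headI_le
    have h_O0_head := headI_replicate_two_append_replicate_one_le c m
    omega

theorem stmt_9 (n : ℕ) (hn : 1 ≤ n) (r : List ℕ)
    (hsort : List.Pairwise (· ≥ ·) r) (hpos : ∀ x ∈ r, 0 < x)
    (hsum : r.sum = 2 * n + 1)
    (hmult : ∀ k : ℕ, Even k → Even (r.count k)) :
    let O0 : List ℕ := if Even n then List.replicate n 2 ++ [1]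
      else List.replicate (n - 1) 2 ++ [1, 1, 1]
    let O1 : List ℕ := 3 :: List.replicate (2 * n - 2) 1
    (¬ Dominates O0 r ↔ 3 ≤ r.headI) ∧ (3 ≤ r.headI ↔ Dominates r O1) :=
  stmt_9_general n r hsort hpos hsum hmult
end

section
/- Let G̃ be a group with central subgroup A, let s : G → G̃ be a section of a central extension p : G̃ → G with cocycle σ(g,h) = s(g)s(h)s(gh)⁻¹ ∈ A. Let t, t', w ∈ G be such that: (i) w and t' commute in G and s(w)s(t')s(w)⁻¹ = s(t'); (ii) s(tw) = s(t)s(w) and s(tt'w) = s(tt')s(w); (iii) t and t' commute. Then σ(tw, t') = σ(t, t'). -/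
theorem stmt_16 {Gt G : Type*} [Group Gt] [Group G]
    (A : Subgroup Gt) (hA : A ≤ Subgroup.center Gt)
    (p : Gt →* G) (s : G → Gt) (hsec : ∀ g : G, p (s g) = g)
    (hσA : ∀ g h : G, s g * s h * (s (g * h))⁻¹ ∈ A)
    (t t' w : G)
    (hcomm_wt' : w * t' = t' * w)
    (hlift : s w * s t' * (s w)⁻¹ = s t')
    (hfac1 : s (t * w) = s t * s w)
    (hfac2 : s ((t * t') * w) = s (t * t') * s w)
    (hcomm_tt' : t * t' = t' * t) :
    s (t * w) * s t' * (s ((t * w) * t'))⁻¹ = s t * s t' * (s (t * t'))⁻¹ := by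
  have h1 : (t * w) * t' = (t * t') * w := by
    rw [mul_assoc, hcomm_wt', ← mul_assoc]
  have h2 : s w * s t' = s t' * s w := by
    conv_rhs => rw [← hlift]
    group
  rw [hfac1, h1, hfac2, mul_inv_rev, mul_assoc, mul_assoc, ← mul_assoc (s w),
    h2, mul_assoc, mul_inv_cancel_left, ← mul_assoc]
end
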